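/- Let t be a binary tree with n leaves and set h(n) := (1/2)·log₂(n/2). Then there exists a finite set A of internal vertices of t with |A| ≥ h(n) such that for every rooted subtree z of t with m(z) ≤ h(n), every element of A is an internal vertex of z (under the canonical identification of positions in z with positions in t). -/

import Mathlib

/-- Finite ordered rooted binary trees. -/
inductive BTree where
  | leaf : BTree
  | node : BTree → BTree → BTree
deriving DecidableEq

/-- Positions (vertices) in a binary tree: `false` = go to the left child,
`true` = go to the right child. -/
abbrev Pos := List Bool

/-- The subtree of `t` at position `p`, if `p` stays inside `t`. -/
def BTree.subtreeAt : BTree → Pos → Option BTree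
  | t, [] => some t
  | .leaf, _ :: _ => none
  | .node l r, b :: p => (if b then r else l).subtreeAt p

/-- `p` is an internal (trivalent) vertex of `t`. -/
def IsInternal (t : BTree) (p : Pos) : Prop :=
  ∃ l r, t.subtreeAt p = some (BTree.node l r)

/-- The number of leaves of a binary tree. -/
def BTree.leaves : BTree → ℕ
  | .leaf => 1
  | .node l r => l.leaves + r.leaves

/-- `z` is a rooted subtree of `t`: `leaf` is a rooted subtree of every tree, and
`node z₁ z₂` is a rooted subtree of `node l r` iff `z₁` is a rooted subtree of `l` and
`z₂` is a rooted subtree of `r`. -/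
def IsRootedSubtree : BTree → BTree → Prop
  | BTree.leaf, _ => True
  | BTree.node _ _, BTree.leaf => False
  | BTree.node z₁ z₂, BTree.node l r => IsRootedSubtree z₁ l ∧ IsRootedSubtree z₂ r

/-- `bfun t z` is the number of leaves of the rooted subtree `z` that are internal
vertices of `t`. -/
def bfun : BTree → BTree → ℕ
  | BTree.leaf, BTree.leaf => 0
  | BTree.node _ _, BTree.leaf => 1
  | BTree.leaf, BTree.node _ _ => 0
  | BTree.node l r, BTree.node z₁ z₂ => bfun l z₁ + bfun r z₂

/-- `mz t z = (n − 1) − (leaves z − 1) − b(t,z)` for a rooted subtree `z` of a tree `t`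
with `n` leaves. -/
def mz (t z : BTree) : ℕ :=
  (t.leaves - 1) - (z.leaves - 1) - bfun t z

/-! `m(z)` counts the internal vertices of `t` lying strictly below a leaf of `z`. Hence if a
vertex `p` is not internal in `z`, the subtree of `t` at `p` has at most `m(z) + 2` leaves:
all its internal vertices except possibly `p` itself are counted by `m(z)`. Following the
heavier child from the root, the vertex at depth `k` carries at least `n / 2^k` leaves,
which exceeds `h(n) + 2` as long as `k < h(n)`; so the first `⌈h(n)⌉` vertices of this
heavy path are internal in every `z` with `m(z) ≤ h(n)`. -/

namespace BTree

theorem one_le_leaves : ∀ t : BTree, 1 ≤ t.leaves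
  | .leaf => le_rfl
  | .node l _ => le_add_right l.one_le_leaves

theorem leaves_le_of_subtreeAt : ∀ {t s : BTree} {p : Pos},
    t.subtreeAt p = some s → s.leaves ≤ t.leaves
  | _, _, [], h => by cases h; rfl
  | .leaf, _, _ :: _, h => by cases h
  | .node l r, _, b :: _, h => by
    have := leaves_le_of_subtreeAt (t := if b then r else l) h
    cases b <;> simp only [leaves, Bool.false_eq_true, if_true, if_false] at this ⊢ <;> omega

/-- The path of length `k` from the root that always moves to the child with more leaves. -/
def heavyPath : BTree → ℕ → Pos
  | _, 0 => []
  | .leaf, k + 1 => false :: heavyPath .leaf k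
  | .node l r, k + 1 =>
    if r.leaves ≤ l.leaves then false :: heavyPath l k else true :: heavyPath r k

theorem length_heavyPath (t : BTree) (k : ℕ) : (t.heavyPath k).length = k := by
  induction k generalizing t with
  | zero => cases t <;> rfl
  | succ k ih =>
    cases t with
    | leaf => simp [heavyPath, ih]
    | node l r => simp only [heavyPath]; split_ifs <;> simp [ih]

theorem heavyPath_injective (t : BTree) : Function.Injective t.heavyPath :=
  fun j k hjk => by simpa only [length_heavyPath] using congrArg List.length hjk

theorem exists_subtreeAt_heavyPath : ∀ (k : ℕ) (t : BTree), 2 ^ k < t.leaves →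
    ∃ l r, t.subtreeAt (t.heavyPath k) = some (node l r) ∧
      t.leaves ≤ 2 ^ k * (node l r).leaves
  | _, .leaf, ht => by simp [leaves] at ht
  | 0, .node l r, _ => ⟨l, r, rfl, by simp⟩
  | k + 1, .node l r, ht => by
    have hl := l.one_le_leaves
    have hr := r.one_le_leaves
    simp only [leaves, pow_succ] at ht
    by_cases hlr : r.leaves ≤ l.leaves
    · obtain ⟨a, b, hab, hle⟩ := exists_subtreeAt_heavyPath k l (by omega)
      refine ⟨a, b, by simpa [heavyPath, hlr, subtreeAt] using hab, ?_⟩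
      simp only [leaves, pow_succ] at hle ⊢
      nlinarith
    · obtain ⟨a, b, hab, hle⟩ := exists_subtreeAt_heavyPath k r (by omega)
      refine ⟨a, b, by simpa [heavyPath, hlr, subtreeAt] using hab, ?_⟩
      simp only [leaves, pow_succ] at hle ⊢
      nlinarith

end BTree

open BTree

theorem leaves_add_bfun_le : ∀ {z t : BTree}, IsRootedSubtree z t →
    z.leaves + bfun t z ≤ t.leaves
  | .leaf, .leaf, _ => le_rfl
  | .leaf, .node l r, _ => by
    have := l.one_le_leaves; have := r.one_le_leaves
    simp only [leaves, bfun]; omega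
  | .node _ _, .node _ _, h => by
    have := leaves_add_bfun_le h.1
    have := leaves_add_bfun_le h.2
    simp only [leaves, bfun]; omega

theorem mz_add_leaves_add_bfun {z t : BTree} (h : IsRootedSubtree z t) :
    mz t z + z.leaves + bfun t z = t.leaves := by
  have := leaves_add_bfun_le h
  have := z.one_le_leaves
  unfold mz; omega

theorem mz_node {z₁ z₂ l r : BTree} (h₁ : IsRootedSubtree z₁ l)
    (h₂ : IsRootedSubtree z₂ r) :
    mz (node l r) (node z₁ z₂) = mz l z₁ + mz r z₂ := by
  have := mz_add_leaves_add_bfun (z := node z₁ z₂) (t := node l r) ⟨h₁, h₂⟩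
  have := mz_add_leaves_add_bfun h₁
  have := mz_add_leaves_add_bfun h₂
  simp only [leaves, bfun] at *
  omega

theorem leaves_le_mz_leaf_add_two : ∀ t : BTree, t.leaves ≤ mz t .leaf + 2
  | .leaf => by simp [leaves]
  | .node l r => by
    have := l.one_le_leaves; have := r.one_le_leaves
    simp only [mz, leaves, bfun]; omega

theorem leaves_le_mz_add_two : ∀ {z t s : BTree} {p : Pos}, IsRootedSubtree z t →
    t.subtreeAt p = some s → ¬ IsInternal z p → s.leaves ≤ mz t z + 2
  | .leaf, t, _, _, _, hs, _ =>
    (leaves_le_of_subtreeAt hs).trans (leaves_le_mz_leaf_add_two t)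
  | .node z₁ z₂, _, _, [], _, _, hz => absurd ⟨z₁, z₂, rfl⟩ hz
  | .node _ _, .leaf, _, _ :: _, hzt, _, _ => hzt.elim
  | .node z₁ z₂, .node l r, _, b :: _, hzt, hs, hz => by
    rw [mz_node hzt.1 hzt.2]
    cases b
    · have := leaves_le_mz_add_two hzt.1 hs hz; omega
    · have := leaves_le_mz_add_two hzt.2 hs hz; omega

theorem natCast_le_half_logb_iff {k n : ℕ} (hn : 0 < n) :
    (k : ℝ) ≤ 1 / 2 * Real.logb 2 ((n : ℝ) / 2) ↔ 2 * 4 ^ k ≤ n := by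
  have hlogb : (k : ℝ) ≤ 1 / 2 * Real.logb 2 ((n : ℝ) / 2) ↔
      (2 : ℝ) ^ ((2 * k : ℕ) : ℝ) ≤ n / 2 := by
    rw [← Real.le_logb_iff_rpow_le one_lt_two (by positivity)]
    push_cast
    constructor <;> intro h <;> linarith
  rw [hlogb, Real.rpow_natCast, pow_mul, le_div_iff₀' two_pos]
  norm_cast

theorem natCast_lt_half_logb_iff {k n : ℕ} (hn : 0 < n) :
    (k : ℝ) < 1 / 2 * Real.logb 2 ((n : ℝ) / 2) ↔ 2 * 4 ^ k < n := by
  have hlogb : (k : ℝ) < 1 / 2 * Real.logb 2 ((n : ℝ) / 2) ↔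
      (2 : ℝ) ^ ((2 * k : ℕ) : ℝ) < n / 2 := by
    rw [← Real.lt_logb_iff_rpow_lt one_lt_two (by positivity)]
    push_cast
    constructor <;> intro h <;> linarith
  rw [hlogb, Real.rpow_natCast, pow_mul, lt_div_iff₀' two_pos]
  norm_cast

theorem add_two_lt_of_four_pow {n k m s : ℕ} (hk : 2 * 4 ^ k < n) (hm : 2 * 4 ^ m ≤ n)
    (hs : n ≤ 2 ^ k * s) : m + 2 < s := by
  by_contra! hsm
  have hpow : m + 2 ≤ 2 * 2 ^ m := by
    have := Nat.lt_two_pow_self (n := m + 1); rw [pow_succ] at this; omega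
  have hn : n ≤ 2 * (2 ^ k * 2 ^ m) := calc
    n ≤ 2 ^ k * s := hs
    _ ≤ 2 ^ k * (2 * 2 ^ m) := Nat.mul_le_mul_left _ (hsm.trans hpow)
    _ = 2 * (2 ^ k * 2 ^ m) := by ring
  have : n * n < n * n := calc
    n * n ≤ (2 * (2 ^ k * 2 ^ m)) * (2 * (2 ^ k * 2 ^ m)) := Nat.mul_le_mul hn hn
    _ = (2 * 4 ^ k) * (2 * 4 ^ m) := by rw [show (4 : ℕ) = 2 * 2 from rfl, mul_pow, mul_pow]; ring
    _ < n * n := Nat.mul_lt_mul_of_lt_of_le hk hm (by omega)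
  exact lt_irrefl _ this

/-- Let `t` be a binary tree with `n` leaves and `h(n) = (1/2)·log₂(n/2)`.
Then there is a finite set `A` of internal vertices of `t` with `|A| ≥ h(n)` such that
for every rooted subtree `z` of `t` with `m(z) ≤ h(n)`, every element of `A` is an
internal vertex of `z` (positions in `z` being canonically identified with positions
in `t`). -/
theorem stmt15 (t : BTree) (n : ℕ) (hn : t.leaves = n) :
    ∃ A : Finset Pos, (∀ p ∈ A, IsInternal t p) ∧
      (1 / 2) * Real.logb 2 ((n : ℝ) / 2) ≤ (A.card : ℝ) ∧
      ∀ z : BTree, IsRootedSubtree z t →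
        (mz t z : ℝ) ≤ (1 / 2) * Real.logb 2 ((n : ℝ) / 2) →
        ∀ p ∈ A, IsInternal z p := by
  subst hn
  have hpos := t.one_le_leaves
  set h := 1 / 2 * Real.logb 2 ((t.leaves : ℝ) / 2)
  have four_pow_lt (k : ℕ) (hk : k < ⌈h⌉₊) : 2 * 4 ^ k < t.leaves :=
    (natCast_lt_half_logb_iff hpos).1 (Nat.lt_ceil.1 hk)
  have hnode (k : ℕ) (hk : k < ⌈h⌉₊) :
      ∃ l r, t.subtreeAt (t.heavyPath k) = some (node l r) ∧
        t.leaves ≤ 2 ^ k * (node l r).leaves := by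
    have := four_pow_lt k hk
    have := Nat.pow_le_pow_left (show 2 ≤ 4 by norm_num) k
    exact exists_subtreeAt_heavyPath k t (by omega)
  refine ⟨(Finset.range ⌈h⌉₊).image t.heavyPath, ?_, ?_, ?_⟩
  · simp only [Finset.mem_image, Finset.mem_range, forall_exists_index, and_imp,
      forall_apply_eq_imp_iff₂]
    intro k hk
    obtain ⟨l, r, hs, -⟩ := hnode k hk
    exact ⟨l, r, hs⟩
  · rw [Finset.card_image_of_injective _ t.heavyPath_injective, Finset.card_range]
    exact Nat.le_ceil h
  · intro z hz hm
    simp only [Finset.mem_image, Finset.mem_range, forall_exists_index, and_imp,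
      forall_apply_eq_imp_iff₂]
    intro k hk
    obtain ⟨l, r, hs, hle⟩ := hnode k hk
    by_contra hz'
    exact (leaves_le_mz_add_two hz hs hz').not_gt <|
      add_two_lt_of_four_pow (four_pow_lt k hk) ((natCast_le_half_logb_iff hpos).1 hm) hle
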